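/- arXiv:2409.14189 — 2 statements merged into one kernel-verified Lean document; each statement's English description precedes it below -/
import Mathlib

section
/- Let σ be a nondecreasing sigmoidal function satisfying (Σ1), (Σ2), (Σ3), let f: [a,b] → ℝ be continuous, and let F_n be the associated neural network operators. Then lim_{n→+∞} sup_{x∈[a,b]} |F_n(f, x) − f(x)| = 0. -/
open Filter Topology MeasureTheory

/-- The density (kernel) function generated by a sigmoidal function. -/
noncomputable def phiFn (σ : ℝ → ℝ) (x : ℝ) : ℝ := (σ (x + 1) - σ (x - 1)) / 2

/-- σ is a (measurable) sigmoidal function. -/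
def Sigmoidal (σ : ℝ → ℝ) : Prop :=
  Measurable σ ∧ Tendsto σ atBot (𝓝 0) ∧ Tendsto σ atTop (𝓝 1)

/-- (Σ1): σ(x) - 1/2 is an odd function. -/
def Sigma1 (σ : ℝ → ℝ) : Prop := ∀ x : ℝ, σ (-x) - 1/2 = -(σ x - 1/2)

/-- (Σ2): σ ∈ C²(ℝ) and σ is concave on [0, +∞). -/
def Sigma2 (σ : ℝ → ℝ) : Prop := ContDiff ℝ 2 σ ∧ ConcaveOn ℝ (Set.Ici 0) σ

/-- (Σ3): σ(x) = O(|x|^{-α-1}) as x → -∞, with α > 0. -/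
def Sigma3 (σ : ℝ → ℝ) (α : ℝ) : Prop :=
  0 < α ∧ σ =O[atBot] fun x : ℝ => |x| ^ (-α - 1)

/-- (Σ4): σ ∈ C^m(ℝ), m ≥ 2, and for each s = 1,…,m there are constants
`K s, C s > 0` with |σ^{(s)}(x)| ≤ C s * |x|^{-β-1} for |x| ≥ K s, where β > m + 1. -/
def Sigma4 (σ : ℝ → ℝ) (m : ℕ) (β : ℝ) (K C : ℕ → ℝ) : Prop :=
  2 ≤ m ∧ (m : ℝ) + 1 < β ∧ ContDiff ℝ m σ ∧
    ∀ s : ℕ, 1 ≤ s → s ≤ m → 0 < K s ∧ 0 < C s ∧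
      ∀ x : ℝ, K s ≤ |x| → |iteratedDeriv s σ x| ≤ C s * |x| ^ (-β - 1)

/-- Algebraic moment of order ν of Φ. -/
noncomputable def algMoment (Φ : ℝ → ℝ) (ν : ℕ) (x : ℝ) : ℝ :=
  ∑' k : ℤ, Φ (x - (k : ℝ)) * ((k : ℝ) - x) ^ ν

/-- (Σ5): the algebraic moments of order j = 1,…,m of φ_σ are constants A j. -/
def Sigma5 (σ : ℝ → ℝ) (m : ℕ) (A : ℕ → ℝ) : Prop :=
  ∀ j : ℕ, 1 ≤ j → j ≤ m → ∀ x : ℝ, algMoment (phiFn σ) j x = A j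

/-- Truncated algebraic moment of order ν of Φ (associated with integers a < b). -/
noncomputable def truncMoment (Φ : ℝ → ℝ) (ν : ℕ) (a b : ℤ) (n : ℕ) (u : ℝ) : ℝ :=
  ∑ k ∈ Finset.Icc ((n : ℤ) * a) ((n : ℤ) * b), Φ (u - (k : ℝ)) * ((k : ℝ) - u) ^ ν

/-- The ν-th discrete absolute moment function of Φ (before taking sup over u). -/
noncomputable def discMoment (Φ : ℝ → ℝ) (ν : ℝ) (u : ℝ) : ℝ :=
  ∑' k : ℤ, |Φ (u - (k : ℝ))| * |u - (k : ℝ)| ^ ν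

/-- The Riemann zeta function (as a real series), ζ(p) = ∑_{i≥1} i^{-p}. -/
noncomputable def zetaR (p : ℝ) : ℝ := ∑' i : ℕ, ((i : ℝ) + 1) ^ (-p)

/-- The NN operator F_n activated by σ. -/
noncomputable def Fop (σ : ℝ → ℝ) (f : ℝ → ℝ) (a b : ℝ) (n : ℕ) (x : ℝ) : ℝ :=
  (∑ k ∈ Finset.Icc ⌈(n : ℝ) * a⌉ ⌊(n : ℝ) * b⌋, f ((k : ℝ) / n) * phiFn σ ((n : ℝ) * x - k)) /
    (∑ k ∈ Finset.Icc ⌈(n : ℝ) * a⌉ ⌊(n : ℝ) * b⌋, phiFn σ ((n : ℝ) * x - k))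

/-- The modified NN operator F̃_n (integer endpoints a < b). -/
noncomputable def Ftil (σ : ℝ → ℝ) (f : ℝ → ℝ) (a b : ℤ) (n : ℕ) (x : ℝ) : ℝ :=
  ∑ k ∈ Finset.Icc ((n : ℤ) * a) ((n : ℤ) * b), f ((k : ℝ) / n) * phiFn σ ((n : ℝ) * x - (k : ℝ))

/-- Sup-norm of g on [a,b]. -/
noncomputable def supNormOn (g : ℝ → ℝ) (a b : ℝ) : ℝ := ⨆ x : Set.Icc a b, |g x|

/-- Modulus of continuity of g on [a,b]. -/
noncomputable def modulus (g : ℝ → ℝ) (a b h : ℝ) : ℝ :=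
  sSup {y : ℝ | ∃ u ∈ Set.Icc a b, ∃ v ∈ Set.Icc a b, |u - v| ≤ h ∧ y = |g u - g v|}

/-- Discrete absolute moment (natural order ν) of Φ: sup over u of the moment series. -/
noncomputable def dmomentN (Φ : ℝ → ℝ) (ν : ℕ) : ℝ :=
  ⨆ u : ℝ, ∑' k : ℤ, |Φ (u - (k : ℝ))| * |u - (k : ℝ)| ^ ν

/-! $F_n$ is a quasi-interpolation operator with the nonnegative kernel $φ_σ$. Oddness of
$σ - 1/2$ and concavity on $[0, ∞)$ give $φ_σ ≥ (σ(1) - 1/2)/2 > 0$ on $[-1, 1]$, and every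
$x ∈ [a, b]$ has a node $k/n$ with $|nx - k| ≤ 1$, so the denominator of $F_n$ is bounded below
uniformly. By (Σ3), $t φ_σ(t) → 0$ as $|t| → ∞$, so the $O(n)$ nodes at distance at least $δ$
from $x$ carry total weight $o(1)$, while the nodes closer than $δ$ contribute at most the
oscillation of $f$ at scale $δ$; uniform continuity of $f$ concludes. -/

open Set

theorem Int.exists_mem_Icc_ceil_floor_abs_sub_le_one {u v w : ℝ} (huw : u ≤ w) (hwv : w ≤ v)
    (huv : ⌈u⌉ ≤ ⌊v⌋) : ∃ k ∈ Finset.Icc ⌈u⌉ ⌊v⌋, |w - k| ≤ 1 := by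
  refine ⟨max ⌈u⌉ ⌊w⌋, Finset.mem_Icc.2 ⟨le_max_left _ _, max_le huv (Int.floor_mono hwv)⟩, ?_⟩
  have hlo : (⌊w⌋ : ℝ) ≤ (max ⌈u⌉ ⌊w⌋ : ℤ) := by exact_mod_cast le_max_right _ _
  have hhi : ((max ⌈u⌉ ⌊w⌋ : ℤ) : ℝ) ≤ ⌈w⌉ := by
    exact_mod_cast max_le (Int.ceil_mono huw) (Int.floor_le_ceil w)
  rw [abs_le]
  constructor <;> linarith [Int.lt_floor_add_one w, Int.ceil_lt_add_one w]

theorem Int.card_Icc_ceil_floor_le {u v : ℝ} (huv : u ≤ v) :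
    ((Finset.Icc ⌈u⌉ ⌊v⌋).card : ℝ) ≤ v - u + 1 := by
  have hle : ⌈u⌉ ≤ ⌊v⌋ + 1 := by
    rw [← Int.lt_add_one_iff, Int.ceil_lt_iff]; push_cast; linarith [Int.lt_floor_add_one v]
  have hcard : ((Finset.Icc ⌈u⌉ ⌊v⌋).card : ℝ) = ⌊v⌋ + 1 - ⌈u⌉ := by
    exact_mod_cast Int.card_Icc_of_le _ _ hle
  rw [hcard]
  linarith [Int.floor_le v, Int.le_ceil u]

theorem div_mem_Icc_of_mem_Icc_ceil_floor {a b t : ℝ} (ht : 0 < t) {k : ℤ}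
    (hk : k ∈ Finset.Icc ⌈t * a⌉ ⌊t * b⌋) : (k : ℝ) / t ∈ Icc a b := by
  rw [Finset.mem_Icc, Int.ceil_le, Int.le_floor] at hk
  rw [mem_Icc, le_div_iff₀ ht, div_le_iff₀ ht]
  constructor <;> linarith

theorem abs_sum_mul_div_sum_sub_le {ι : Type*} (s : Finset ι) (g w : ι → ℝ) {y ε θ c : ℝ}
    (hw : ∀ k ∈ s, 0 ≤ w k) (hθ : 0 ≤ θ) (hc : 0 < c) (hcw : c ≤ ∑ k ∈ s, w k)
    (hterm : ∀ k ∈ s, |g k - y| * w k ≤ ε * w k + θ) :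
    |(∑ k ∈ s, g k * w k) / (∑ k ∈ s, w k) - y| ≤ ε + s.card * θ / c := by
  set D := ∑ k ∈ s, w k
  have hD : 0 < D := hc.trans_le hcw
  have hsub : (∑ k ∈ s, g k * w k) / D - y = (∑ k ∈ s, (g k - y) * w k) / D := by
    rw [eq_div_iff hD.ne', sub_mul, div_mul_cancel₀ _ hD.ne', Finset.mul_sum,
      ← Finset.sum_sub_distrib]
    simp only [sub_mul, mul_comm y]
  have hsum : |∑ k ∈ s, (g k - y) * w k| ≤ ε * D + s.card * θ :=
    calc |∑ k ∈ s, (g k - y) * w k| ≤ ∑ k ∈ s, |g k - y| * w k := by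
          refine (Finset.abs_sum_le_sum_abs _ _).trans_eq (Finset.sum_congr rfl fun k hk => ?_)
          rw [abs_mul, abs_of_nonneg (hw k hk)]
      _ ≤ ∑ k ∈ s, (ε * w k + θ) := Finset.sum_le_sum hterm
      _ = ε * D + s.card * θ := by
          rw [Finset.sum_add_distrib, ← Finset.mul_sum, Finset.sum_const, nsmul_eq_mul]
  rw [hsub, abs_div, abs_of_pos hD, div_le_iff₀ hD]
  calc |∑ k ∈ s, (g k - y) * w k| ≤ ε * D + s.card * θ := hsum
    _ = ε * D + s.card * θ / c * c := by rw [div_mul_cancel₀ _ hc.ne']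
    _ ≤ ε * D + s.card * θ / c * D := by gcongr
    _ = (ε + s.card * θ / c) * D := by ring

noncomputable def quasiInterp (Φ f : ℝ → ℝ) (a b : ℝ) (n : ℕ) (x : ℝ) : ℝ :=
  (∑ k ∈ Finset.Icc ⌈(n : ℝ) * a⌉ ⌊(n : ℝ) * b⌋, f ((k : ℝ) / n) * Φ ((n : ℝ) * x - k)) /
    (∑ k ∈ Finset.Icc ⌈(n : ℝ) * a⌉ ⌊(n : ℝ) * b⌋, Φ ((n : ℝ) * x - k))

section QuasiInterp

variable {Φ f : ℝ → ℝ} {a b c : ℝ}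

theorem abs_sub_mul_kernel_le (hΦ : ∀ t, 0 ≤ Φ t) {M ε δ η r x y t : ℝ} (hr : 0 < r)
    (hδ : 0 < δ) (hM : ∀ z ∈ Icc a b, |f z| ≤ M) (hx : x ∈ Icc a b) (hy : y ∈ Icc a b)
    (hfδ : ∀ z ∈ Icc a b, |z - x| < δ → |f z - f x| < ε) (hyx : |y - x| = |t| / r)
    (hfar : ∀ s, r * δ ≤ |s| → |s| * Φ s ≤ η) :
    |f y - f x| * Φ t ≤ ε * Φ t + 2 * M * (η / (r * δ)) := by
  have hε : 0 < ε := by simpa using hfδ x hx (by simpa using hδ)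
  have hM0 : 0 ≤ M := (abs_nonneg _).trans (hM x hx)
  have hη : 0 ≤ η := (mul_nonneg (abs_nonneg _) (hΦ _)).trans (hfar _ (le_abs_self _))
  by_cases hnear : |t| < r * δ
  · have hdist : |y - x| < δ := by rwa [hyx, div_lt_iff₀' hr]
    have := mul_le_mul_of_nonneg_right (hfδ y hy hdist).le (hΦ t)
    have : 0 ≤ 2 * M * (η / (r * δ)) := by positivity
    linarith
  · push Not at hnear
    have hΦt : Φ t ≤ η / (r * δ) := by
      rw [le_div_iff₀ (mul_pos hr hδ)]
      calc Φ t * (r * δ) ≤ Φ t * |t| := mul_le_mul_of_nonneg_left hnear (hΦ t)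
        _ ≤ η := by rw [mul_comm]; exact hfar t hnear
    have hf2M : |f y - f x| ≤ 2 * M := by linarith [abs_sub (f y) (f x), hM y hy, hM x hx]
    have := mul_le_mul hf2M hΦt (hΦ t) (by positivity)
    have : 0 ≤ ε * Φ t := mul_nonneg hε.le (hΦ t)
    linarith

theorem abs_quasiInterp_sub_le (hΦ : ∀ t, 0 ≤ Φ t) (hc : 0 < c)
    (hΦc : ∀ t, |t| ≤ 1 → c ≤ Φ t) {M ε δ η x : ℝ} {n : ℕ} (hM : ∀ y ∈ Icc a b, |f y| ≤ M)
    (hδ : 0 < δ) (hx : x ∈ Icc a b) (hfδ : ∀ y ∈ Icc a b, |y - x| < δ → |f y - f x| < ε)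
    (hn : 1 ≤ n * (b - a)) (hfar : ∀ t, n * δ ≤ |t| → |t| * Φ t ≤ η) :
    |quasiInterp Φ f a b n x - f x| ≤ ε + 4 * M * (b - a) / (δ * c) * η := by
  have hn0 : (0 : ℝ) < n := by
    rcases Nat.eq_zero_or_pos n with rfl | h
    · norm_num at hn
    · exact_mod_cast h
  have hM0 : 0 ≤ M := (abs_nonneg _).trans (hM x hx)
  have hη : 0 ≤ η := (mul_nonneg (abs_nonneg _) (hΦ _)).trans (hfar _ (le_abs_self _))
  set S := Finset.Icc ⌈(n : ℝ) * a⌉ ⌊(n : ℝ) * b⌋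
  have hS : ⌈(n : ℝ) * a⌉ ≤ ⌊(n : ℝ) * b⌋ :=
    Int.le_floor.2 (by linarith [Int.ceil_lt_add_one ((n : ℝ) * a)])
  obtain ⟨k₀, hk₀S, hk₀⟩ := Int.exists_mem_Icc_ceil_floor_abs_sub_le_one
    (mul_le_mul_of_nonneg_left hx.1 hn0.le) (mul_le_mul_of_nonneg_left hx.2 hn0.le) hS
  have hD : c ≤ ∑ k ∈ S, Φ (n * x - k) := (hΦc _ hk₀).trans <|
    Finset.single_le_sum (f := fun k : ℤ => Φ (n * x - k)) (fun k _ => hΦ _) hk₀S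
  have hterm (k : ℤ) (hk : k ∈ S) : |f (k / n) - f x| * Φ (n * x - k) ≤
      ε * Φ (n * x - k) + 2 * M * (η / (n * δ)) := by
    refine abs_sub_mul_kernel_le hΦ hn0 hδ hM hx (div_mem_Icc_of_mem_Icc_ceil_floor hn0 hk) hfδ
      ?_ hfar
    rw [show (k : ℝ) / n - x = -((n * x - k) / n) by field_simp; ring, abs_neg, abs_div,
      abs_of_pos hn0]
  have hcard : (S.card : ℝ) ≤ 2 * (n * (b - a)) := by
    have := Int.card_Icc_ceil_floor_le (mul_le_mul_of_nonneg_left (hx.1.trans hx.2) hn0.le)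
    linarith
  calc |quasiInterp Φ f a b n x - f x|
      ≤ ε + S.card * (2 * M * (η / (n * δ))) / c :=
        abs_sum_mul_div_sum_sub_le S _ _ (fun k _ => hΦ _) (by positivity) hc hD hterm
    _ ≤ ε + 2 * (n * (b - a)) * (2 * M * (η / (n * δ))) / c := by gcongr
    _ = ε + 4 * M * (b - a) / (δ * c) * η := by field_simp; ring

theorem tendstoUniformlyOn_quasiInterp (hΦ : ∀ t, 0 ≤ Φ t) (hc : 0 < c)
    (hΦc : ∀ t, |t| ≤ 1 → c ≤ Φ t) (hdecay : Tendsto (fun t => t * Φ t) (cocompact ℝ) (𝓝 0))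
    (hab : a < b) (hf : ContinuousOn f (Icc a b)) :
    TendstoUniformlyOn (quasiInterp Φ f a b) f atTop (Icc a b) := by
  obtain ⟨M, hM⟩ := isCompact_Icc.exists_bound_of_continuousOn hf
  rw [Metric.tendstoUniformlyOn_iff]
  intro ε hε
  obtain ⟨δ, hδ, hfδ⟩ := Metric.uniformContinuousOn_iff.1
    (isCompact_Icc.uniformContinuousOn_of_continuous hf) (ε / 2) (half_pos hε)
  obtain ⟨η, hη, hηε⟩ := exists_pos_mul_lt (half_pos hε) (4 * M * (b - a) / (δ * c))
  obtain ⟨R, -, hR⟩ := (hasBasis_cobounded_norm.eventually_iff).1 <|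
    Metric.cobounded_eq_cocompact (α := ℝ) ▸ (Metric.tendsto_nhds.1 hdecay) η hη
  have hn := tendsto_natCast_atTop_atTop (R := ℝ)
  filter_upwards [(hn.atTop_mul_const (sub_pos.2 hab)).eventually_ge_atTop 1,
    (hn.atTop_mul_const hδ).eventually_ge_atTop R] with n hn1 hnR x hx
  rw [dist_comm, Real.dist_eq]
  calc |quasiInterp Φ f a b n x - f x| ≤ ε / 2 + 4 * M * (b - a) / (δ * c) * η := by
        refine abs_quasiInterp_sub_le hΦ hc hΦc hM hδ hx
          (fun y hy h => hfδ y hy x hx h) hn1 fun t ht => ?_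
        simpa [abs_mul, abs_of_nonneg (hΦ t)] using (hR (hnR.trans ht)).le
    _ < ε := by linarith

end QuasiInterp

section Sigmoid

variable {σ : ℝ → ℝ}

theorem Sigma1.apply_neg (h1 : Sigma1 σ) (x : ℝ) : σ (-x) = 1 - σ x := by
  linarith [h1 x]

theorem Sigma1.apply_zero (h1 : Sigma1 σ) : σ 0 = 1 / 2 := by
  linarith [h1.apply_neg 0, congrArg σ (neg_zero : -(0 : ℝ) = 0)]

theorem phiFn_neg (h1 : Sigma1 σ) (x : ℝ) : phiFn σ (-x) = phiFn σ x := by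
  rw [phiFn, phiFn, show -x + 1 = -(x - 1) by ring, show -x - 1 = -(x + 1) by ring,
    h1.apply_neg, h1.apply_neg]
  ring

theorem phiFn_nonneg (hmono : Monotone σ) (x : ℝ) : 0 ≤ phiFn σ x := by
  have := hmono (by linarith : x - 1 ≤ x + 1)
  unfold phiFn
  linarith

theorem half_lt_sigma_one (hσ : Sigmoidal σ) (h1 : Sigma1 σ) (h2 : Sigma2 σ) :
    1 / 2 < σ 1 := by
  by_contra! h
  -- slopes of a concave function decrease, so σ 1 ≤ σ 0 would keep σ ≤ 1/2 beyond 1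
  have hbound : ∀ t ≥ 2, σ t ≤ 1 / 2 := by
    intro t ht
    have := h2.2.slope_anti_adjacent (mem_Ici.2 le_rfl) (mem_Ici.2 (by linarith : (0 : ℝ) ≤ t))
      zero_lt_one (by linarith : (1 : ℝ) < t)
    rw [h1.apply_zero, sub_zero, div_one, div_le_iff₀ (by linarith)] at this
    nlinarith
  have := le_of_tendsto hσ.2.2 (eventually_atTop.2 ⟨2, hbound⟩)
  norm_num at this

theorem phiFn_ge_of_abs_le_one (hmono : Monotone σ) (h1 : Sigma1 σ) {t : ℝ} (ht : |t| ≤ 1) :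
    (σ 1 - 1 / 2) / 2 ≤ phiFn σ t := by
  wlog h : 0 ≤ t generalizing t
  · rw [← phiFn_neg h1]
    exact this (by rwa [abs_neg]) (by linarith)
  rw [abs_of_nonneg h] at ht
  have := hmono (by linarith : 1 ≤ t + 1)
  have := hmono (by linarith : t - 1 ≤ 0)
  unfold phiFn
  linarith [h1.apply_zero]

theorem phiFn_le_sigma_one_sub_abs (hσ : Sigmoidal σ) (hmono : Monotone σ) (h1 : Sigma1 σ)
    (t : ℝ) : phiFn σ t ≤ σ (1 - |t|) / 2 := by
  have heven : phiFn σ |t| = phiFn σ t := by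
    rcases abs_choice t with h | h <;> rw [h]; exact phiFn_neg h1 t
  rw [← heven, phiFn, show |t| - 1 = -(1 - |t|) by ring, h1.apply_neg]
  linarith [hmono.ge_of_tendsto hσ.2.2 (|t| + 1)]

theorem Sigma3.tendsto_mul_atBot {α : ℝ} (h3 : Sigma3 σ α) :
    Tendsto (fun x => x * σ x) atBot (𝓝 0) := by
  refine ((Asymptotics.isBigO_refl (fun x : ℝ => x) atBot).mul h3.2).trans_tendsto ?_
  rw [tendsto_zero_iff_abs_tendsto_zero]
  refine ((tendsto_rpow_neg_atTop h3.1).comp tendsto_abs_atBot_atTop).congr' ?_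
  filter_upwards [eventually_lt_atBot 0] with x hx
  have hx' : 0 < |x| := abs_pos.2 hx.ne
  rw [Function.comp_apply, Function.comp_apply, abs_mul, abs_of_pos (Real.rpow_pos_of_pos hx' _),
    show -α - 1 = -α + -1 by ring, Real.rpow_add hx', Real.rpow_neg_one]
  field_simp

theorem tendsto_mul_phiFn_cocompact {α : ℝ} (hσ : Sigmoidal σ) (hmono : Monotone σ)
    (h1 : Sigma1 σ) (h3 : Sigma3 σ α) :
    Tendsto (fun t => t * phiFn σ t) (cocompact ℝ) (𝓝 0) := by
  have hlim : Tendsto (fun s => (σ s - s * σ s) / 2) atBot (𝓝 0) := by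
    simpa using (hσ.2.1.sub h3.tendsto_mul_atBot).div_const 2
  have hs : Tendsto (fun t : ℝ => 1 - |t|) (cocompact ℝ) atBot :=
    tendsto_atBot_add_const_left _ 1 (tendsto_neg_atTop_atBot.comp tendsto_norm_cocompact_atTop)
  refine squeeze_zero_norm (fun t => ?_) (hlim.comp hs)
  rw [Real.norm_eq_abs, abs_mul, abs_of_nonneg (phiFn_nonneg hmono t), Function.comp_apply]
  calc |t| * phiFn σ t ≤ |t| * (σ (1 - |t|) / 2) :=
        mul_le_mul_of_nonneg_left (phiFn_le_sigma_one_sub_abs hσ hmono h1 t) (abs_nonneg t)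
    _ = (σ (1 - |t|) - (1 - |t|) * σ (1 - |t|)) / 2 := by ring

end Sigmoid

theorem uniform_convergence_NN (σ : ℝ → ℝ) (α : ℝ) (hσ : Sigmoidal σ) (hmono : Monotone σ)
    (h1 : Sigma1 σ) (h2 : Sigma2 σ) (h3 : Sigma3 σ α)
    (a b : ℝ) (hab : a < b) (f : ℝ → ℝ) (hf : ContinuousOn f (Set.Icc a b)) :
    TendstoUniformlyOn (fun (n : ℕ) (x : ℝ) => Fop σ f a b n x) f atTop (Set.Icc a b) := by
  have hc : 0 < (σ 1 - 1 / 2) / 2 := by linarith [half_lt_sigma_one hσ h1 h2]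
  exact tendstoUniformlyOn_quasiInterp (Φ := phiFn σ) (phiFn_nonneg hmono) hc
    (fun _ => phiFn_ge_of_abs_le_one hmono h1) (tendsto_mul_phiFn_cocompact hσ hmono h1 h3) hab hf
end

section
/- Let σ be a nondecreasing sigmoidal function satisfying (Σ1)–(Σ5) with parameters m ≥ 2 and β > m + 1. Then for every s ∈ {1, …, m} and every j ∈ {0, …, s−1}, the algebraic moment 𝒜_j(φ_σ^{(s)}, x) := ∑_{k∈ℤ} φ_σ^{(s)}(x−k)(k−x)^j equals 0 for every x ∈ ℝ. -/
open Filter Topology MeasureTheory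

/-! Write `M t j` for the moment `algMoment (iteratedDeriv t (phiFn σ)) j`. The decay of the
derivatives of `σ` from (Σ4) passes to those of `φ_σ` (through the mean value theorem when
`t = 0`) and dominates the series defining `M t j` and its termwise derivative locally uniformly,
so `(M t j)' = M (t + 1) j - j * M t (j - 1)`. The moments `M 0 j` are constant: by (Σ5) for
`j ≥ 1`, and for `j = 0` because `M 1 0 = ∑ₖ (σ'(x + 1 - k) - σ'(x - 1 - k)) / 2` telescopes to `0`.
Inductively every `M t j` with `t < m` is constant, hence `M (t + 1) j = j * M t (j - 1)`, and
iterating this from `M s j` reaches a factor `0` after `j + 1` steps. -/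

open Asymptotics

lemma inv_one_add_abs_pow_le_mul (p : ℕ) (u v : ℝ) :
    ((1 + |u|) ^ p)⁻¹ ≤ (1 + |u - v|) ^ p * ((1 + |v|) ^ p)⁻¹ := by
  have key : 1 + |v| ≤ (1 + |u|) * (1 + |u - v|) := by
    have := abs_sub_abs_le_abs_sub v u
    rw [abs_sub_comm] at this
    nlinarith [abs_nonneg u, abs_nonneg (u - v)]
  rw [← div_eq_mul_inv, le_div_iff₀ (by positivity), inv_mul_le_iff₀ (by positivity), ← mul_pow]
  exact pow_le_pow_left₀ (by positivity) key p

lemma inv_one_add_abs_pow_le_of_abs_sub_le_one {u v : ℝ} (h : |u - v| ≤ 1) (p : ℕ) :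
    ((1 + |u|) ^ p)⁻¹ ≤ 2 ^ p * ((1 + |v|) ^ p)⁻¹ := by
  refine (inv_one_add_abs_pow_le_mul p u v).trans ?_
  gcongr
  linarith

lemma isBigO_top_inv_one_add_abs_pow_of_le {p q : ℕ} (hpq : p ≤ q) :
    (fun u : ℝ => ((1 + |u|) ^ q)⁻¹) =O[⊤] fun u => ((1 + |u|) ^ p)⁻¹ := by
  refine isBigO_top.mpr ⟨1, fun u => ?_⟩
  rw [one_mul, Real.norm_of_nonneg (by positivity), Real.norm_of_nonneg (by positivity)]
  gcongr
  linarith [abs_nonneg u]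

lemma summable_inv_one_add_abs_sub_int_sq (x : ℝ) :
    Summable fun k : ℤ => ((1 + |x - k|) ^ 2)⁻¹ := by
  have h₀ : Summable fun k : ℤ => ((1 + |(k : ℝ)|) ^ 2)⁻¹ := by
    refine (Real.summable_one_div_int_pow.mpr one_lt_two).of_norm_bounded_eventually ?_
    filter_upwards [eventually_cofinite_ne 0] with k hk
    have hk : (0 : ℝ) < |(k : ℝ)| := abs_pos.mpr (Int.cast_ne_zero.mpr hk)
    rw [Real.norm_of_nonneg (by positivity), one_div, ← sq_abs (k : ℝ)]
    gcongr
    linarith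
  refine (h₀.mul_left ((1 + |x|) ^ 2)).of_nonneg_of_le (fun k => by positivity) fun k => ?_
  simpa using inv_one_add_abs_pow_le_mul 2 (x - k) (-k)

lemma isBigO_top_of_isBigO_cocompact {f w : ℝ → ℝ} (hf : Continuous f) (hw : Continuous w)
    (hw₀ : ∀ u, w u ≠ 0) (h : f =O[cocompact ℝ] w) : f =O[⊤] w := by
  obtain ⟨c, hc⟩ := h.bound
  have hratio : (fun u => f u / w u) =O[cocompact ℝ] (1 : ℝ → ℝ) := by
    refine IsBigO.of_bound c (hc.mono fun u hu => ?_)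
    rwa [Pi.one_apply, norm_one, mul_one, norm_div, div_le_iff₀ (norm_pos_iff.mpr (hw₀ u))]
  obtain ⟨C, hC⟩ := isBounded_iff_forall_norm_le.mp
    (((hf.div hw hw₀).isBounded_range_iff_isBigO).mpr hratio)
  refine isBigO_top.mpr ⟨C, fun u => ?_⟩
  rw [← div_le_iff₀ (norm_pos_iff.mpr (hw₀ u)), ← norm_div]
  exact hC _ ⟨u, rfl⟩

lemma isBigO_top_inv_one_add_abs_pow_of_abs_le_rpow {f : ℝ → ℝ} (hf : Continuous f)
    {R c b : ℝ} {p : ℕ} (hpb : (p : ℝ) ≤ b) (hbound : ∀ u, R ≤ |u| → |f u| ≤ c * |u| ^ (-b)) :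
    f =O[⊤] fun u => ((1 + |u|) ^ p)⁻¹ := by
  have hw : Continuous fun u : ℝ => ((1 + |u|) ^ p)⁻¹ :=
    ((continuous_const.add continuous_abs).pow p).inv₀ fun u => (by positivity : (1 + |u|) ^ p ≠ 0)
  refine isBigO_top_of_isBigO_cocompact hf hw (fun u => by positivity)
    (IsBigO.of_bound (|c| * 2 ^ p) ?_)
  filter_upwards [tendsto_norm_cocompact_atTop.eventually_ge_atTop (max R 1)] with u hu
  rw [Real.norm_eq_abs, max_le_iff] at hu
  have hdecay : |u| ^ (-b) ≤ 2 ^ p * ((1 + |u|) ^ p)⁻¹ := by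
    calc |u| ^ (-b) ≤ |u| ^ (-(p : ℝ)) :=
          Real.rpow_le_rpow_of_exponent_le hu.2 (neg_le_neg hpb)
      _ = (|u| ^ p)⁻¹ := by rw [Real.rpow_neg (abs_nonneg u), Real.rpow_natCast]
      _ ≤ 2 ^ p * ((1 + |u|) ^ p)⁻¹ := by
          rw [← div_eq_mul_inv, le_div_iff₀ (by positivity),
            inv_mul_le_iff₀ (pow_pos (by linarith) p), ← mul_pow]
          gcongr
          linarith
  calc ‖f u‖ ≤ c * |u| ^ (-b) := hbound u hu.1
    _ ≤ |c| * (2 ^ p * ((1 + |u|) ^ p)⁻¹) := by gcongr; exact le_abs_self c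
    _ = |c| * 2 ^ p * ‖((1 + |u|) ^ p)⁻¹‖ := by
        rw [Real.norm_of_nonneg (by positivity), mul_assoc]

lemma isBigO_top_of_forall_exists_near {f g : ℝ → ℝ} {p : ℕ}
    (hg : g =O[⊤] fun u => ((1 + |u|) ^ p)⁻¹) (h : ∀ u, ∃ v, |v - u| ≤ 1 ∧ |f u| ≤ |g v|) :
    f =O[⊤] fun u => ((1 + |u|) ^ p)⁻¹ := by
  obtain ⟨c, hc₀, hc⟩ := hg.exists_nonneg
  rw [isBigOWith_top] at hc
  refine isBigO_top.mpr ⟨c * 2 ^ p, fun u => ?_⟩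
  obtain ⟨v, hvu, hfg⟩ := h u
  calc ‖f u‖ ≤ ‖g v‖ := hfg
    _ ≤ c * ((1 + |v|) ^ p)⁻¹ := by
        simpa only [Real.norm_of_nonneg (by positivity : (0 : ℝ) ≤ ((1 + |v|) ^ p)⁻¹)] using hc v
    _ ≤ c * (2 ^ p * ((1 + |u|) ^ p)⁻¹) := by
        gcongr; exact inv_one_add_abs_pow_le_of_abs_sub_le_one hvu p
    _ = c * 2 ^ p * ‖((1 + |u|) ^ p)⁻¹‖ := by
        rw [Real.norm_of_nonneg (by positivity), mul_assoc]

lemma isBigO_top_mul_neg_pow {Φ : ℝ → ℝ} {n j : ℕ}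
    (h : Φ =O[⊤] fun u => ((1 + |u|) ^ (n + 2))⁻¹) (hj : j ≤ n) :
    (fun v => Φ v * (-v) ^ j) =O[⊤] fun u => ((1 + |u|) ^ 2)⁻¹ := by
  have hpow : (fun v : ℝ => (-v) ^ j) =O[⊤] fun u => (1 + |u|) ^ n := by
    refine isBigO_top.mpr ⟨1, fun u => ?_⟩
    rw [one_mul, norm_pow, norm_neg, Real.norm_eq_abs, Real.norm_of_nonneg (by positivity)]
    calc |u| ^ j ≤ (1 + |u|) ^ j := by gcongr; linarith
      _ ≤ (1 + |u|) ^ n := pow_le_pow_right₀ (by linarith [abs_nonneg u]) hj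
  refine (h.mul hpow).congr_right fun u => ?_
  have : (1 + |u|) ^ n ≠ 0 := by positivity
  rw [pow_add, mul_inv, mul_comm ((1 + |u|) ^ n)⁻¹, mul_assoc, inv_mul_cancel₀ this, mul_one]

lemma summable_comp_sub_int {Ψ : ℝ → ℝ} (h : Ψ =O[⊤] fun u => ((1 + |u|) ^ 2)⁻¹) (x : ℝ) :
    Summable fun k : ℤ => Ψ (x - k) := by
  obtain ⟨c, hc⟩ := isBigO_top.mp h
  refine ((summable_inv_one_add_abs_sub_int_sq x).mul_left c).of_norm_bounded fun k => ?_
  simpa [Real.norm_of_nonneg] using hc (x - k)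

lemma hasDerivAt_tsum_comp_sub_int {Ψ Ψ' : ℝ → ℝ} (hΨ : ∀ v, HasDerivAt Ψ (Ψ' v) v)
    (h : Ψ =O[⊤] fun u => ((1 + |u|) ^ 2)⁻¹) (h' : Ψ' =O[⊤] fun u => ((1 + |u|) ^ 2)⁻¹)
    (x : ℝ) : HasDerivAt (fun y => ∑' k : ℤ, Ψ (y - k)) (∑' k : ℤ, Ψ' (x - k)) x := by
  obtain ⟨c, hc₀, hc⟩ := h'.exists_nonneg
  rw [isBigOWith_top] at hc
  have hbound : ∀ (k : ℤ), ∀ y ∈ Metric.ball x 1,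
      ‖Ψ' (y - k)‖ ≤ c * 2 ^ 2 * ((1 + |x - k|) ^ 2)⁻¹ := by
    intro k y hy
    have hyx : |(y - k) - (x - k)| ≤ 1 := by
      rw [sub_sub_sub_cancel_right, ← Real.dist_eq]; exact (Metric.mem_ball.mp hy).le
    calc ‖Ψ' (y - k)‖ ≤ c * ((1 + |y - k|) ^ 2)⁻¹ := by
          simpa only [Real.norm_of_nonneg (by positivity : (0 : ℝ) ≤ ((1 + |y - k|) ^ 2)⁻¹)]
            using hc (y - k)
      _ ≤ c * (2 ^ 2 * ((1 + |x - k|) ^ 2)⁻¹) := by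
          gcongr; exact inv_one_add_abs_pow_le_of_abs_sub_le_one hyx 2
      _ = _ := by ring
  exact hasDerivAt_tsum_of_isPreconnected
    ((summable_inv_one_add_abs_sub_int_sq x).mul_left (c * 2 ^ 2)) Metric.isOpen_ball
    (convex_ball x 1).isPreconnected (fun k y _ => (hΨ (y - k)).comp_sub_const y k) hbound
    (Metric.mem_ball_self one_pos) (summable_comp_sub_int h x) (Metric.mem_ball_self one_pos)

lemma tsum_phiFn_comp_sub_int {g : ℝ → ℝ} (hg : ∀ y, Summable fun k : ℤ => g (y - k)) (x : ℝ) :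
    ∑' k : ℤ, phiFn g (x - k) = 0 := by
  have hshift : ∑' k : ℤ, g (x + 1 - k) = ∑' k : ℤ, g (x - 1 - k) := by
    rw [← (Equiv.addRight (2 : ℤ)).tsum_eq]
    congr 1 with k
    rw [Equiv.coe_addRight, Int.cast_add, Int.cast_two]
    ring_nf
  have hsplit : ∀ k : ℤ, phiFn g (x - k) = (g (x + 1 - k) - g (x - 1 - k)) / 2 := fun k => by
    rw [phiFn, sub_add_eq_add_sub, sub_right_comm]
  simp_rw [hsplit, tsum_div_const, (hg _).tsum_sub (hg _), hshift, sub_self, zero_div]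

lemma algMoment_eq_tsum (Φ : ℝ → ℝ) (j : ℕ) (x : ℝ) :
    algMoment Φ j x = ∑' k : ℤ, Φ (x - k) * (-(x - k)) ^ j := by
  simp only [algMoment, neg_sub]

lemma hasDerivAt_algMoment {Φ Φ' : ℝ → ℝ} {n j : ℕ} (hΦ : ∀ v, HasDerivAt Φ (Φ' v) v)
    (h : Φ =O[⊤] fun u => ((1 + |u|) ^ (n + 2))⁻¹)
    (h' : Φ' =O[⊤] fun u => ((1 + |u|) ^ (n + 2))⁻¹) (hj : j ≤ n) (x : ℝ) :
    HasDerivAt (algMoment Φ j) (algMoment Φ' j x - j * algMoment Φ (j - 1) x) x := by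
  have hd : ∀ v, HasDerivAt (fun v => Φ v * (-v) ^ j)
      (Φ' v * (-v) ^ j - j * (Φ v * (-v) ^ (j - 1))) v := fun v => by
    refine ((hΦ v).mul ((hasDerivAt_neg v).fun_pow j)).congr_deriv ?_
    ring
  have hΦj := isBigO_top_mul_neg_pow h hj
  have hΦ'j := isBigO_top_mul_neg_pow h' hj
  have hΦj₁ := isBigO_top_mul_neg_pow h ((j.sub_le 1).trans hj)
  have H := hasDerivAt_tsum_comp_sub_int hd hΦj (hΦ'j.sub (hΦj₁.const_mul_left j)) x
  rw [(summable_comp_sub_int hΦ'j x).tsum_sub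
    ((summable_comp_sub_int hΦj₁ x).mul_left (j : ℝ)), tsum_mul_left] at H
  simpa only [← algMoment_eq_tsum] using H

lemma iteratedDeriv_phiFn {σ : ℝ → ℝ} {t : ℕ} (hσ : ContDiff ℝ t σ) :
    iteratedDeriv t (phiFn σ) = phiFn (iteratedDeriv t σ) := by
  funext u
  have h₁ : ContDiff ℝ t fun x => σ (x + 1) := hσ.comp (contDiff_id.add contDiff_const)
  have h₂ : ContDiff ℝ t fun x => σ (x - 1) := hσ.comp (contDiff_id.sub contDiff_const)
  change iteratedDeriv t (fun x => (σ (x + 1) - σ (x - 1)) / 2) u = _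
  rw [iteratedDeriv_div_const, iteratedDeriv_fun_sub h₁.contDiffAt h₂.contDiffAt,
    iteratedDeriv_comp_add_const, iteratedDeriv_comp_sub_const, phiFn]

lemma ContDiff.phiFn {σ : ℝ → ℝ} {n : WithTop ℕ∞} (hσ : ContDiff ℝ n σ) :
    ContDiff ℝ n (phiFn σ) :=
  ((hσ.comp (contDiff_id.add contDiff_const)).sub
    (hσ.comp (contDiff_id.sub contDiff_const))).div_const 2

lemma exists_abs_phiFn_le (g : ℝ → ℝ) (u : ℝ) : ∃ v, |v - u| ≤ 1 ∧ |phiFn g u| ≤ |g v| := by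
  rw [phiFn, abs_div, abs_two]
  rcases le_total |g (u - 1)| |g (u + 1)| with h | h
  · exact ⟨u + 1, by norm_num, by linarith [abs_sub (g (u + 1)) (g (u - 1))]⟩
  · exact ⟨u - 1, by norm_num, by linarith [abs_sub (g (u + 1)) (g (u - 1))]⟩

lemma exists_phiFn_eq_deriv {g : ℝ → ℝ} (hg : Differentiable ℝ g) (u : ℝ) :
    ∃ v, |v - u| ≤ 1 ∧ phiFn g u = deriv g v := by
  obtain ⟨v, hv, hslope⟩ := exists_deriv_eq_slope g (by linarith : u - 1 < u + 1)
    hg.continuous.continuousOn hg.differentiableOn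
  refine ⟨v, abs_le.mpr ⟨by linarith [hv.1], by linarith [hv.2]⟩, ?_⟩
  rw [hslope, phiFn]
  ring_nf

namespace Sigma4

variable {σ : ℝ → ℝ} {m : ℕ} {β : ℝ} {K C : ℕ → ℝ}

lemma isBigO_iteratedDeriv (h4 : Sigma4 σ m β K C) {s : ℕ} (hs1 : 1 ≤ s) (hsm : s ≤ m) :
    iteratedDeriv s σ =O[⊤] fun u => ((1 + |u|) ^ (m + 2))⁻¹ := by
  obtain ⟨-, hβ, hσ, hbound⟩ := h4
  obtain ⟨-, -, hs⟩ := hbound s hs1 hsm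
  refine isBigO_top_inv_one_add_abs_pow_of_abs_le_rpow
    (hσ.continuous_iteratedDeriv s (by exact_mod_cast hsm)) (R := K s) (c := C s) (b := β + 1)
    (by push_cast; linarith) fun u hu => ?_
  rw [neg_add']
  exact hs u hu

lemma isBigO_iteratedDeriv_phiFn (h4 : Sigma4 σ m β K C) {t : ℕ} (ht : t ≤ m) :
    iteratedDeriv t (phiFn σ) =O[⊤] fun u => ((1 + |u|) ^ (m + 2))⁻¹ := by
  have hσ : ContDiff ℝ m σ := h4.2.2.1
  have h1m : 1 ≤ m := by linarith [h4.1]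
  rw [iteratedDeriv_phiFn (hσ.of_le (by exact_mod_cast ht))]
  rcases t.eq_zero_or_pos with rfl | ht1
  · refine isBigO_top_of_forall_exists_near (h4.isBigO_iteratedDeriv le_rfl h1m) fun u => ?_
    have hdiff : Differentiable ℝ σ :=
      hσ.differentiable (by exact_mod_cast Nat.one_le_iff_ne_zero.mp h1m)
    obtain ⟨v, hvu, hv⟩ := exists_phiFn_eq_deriv hdiff u
    exact ⟨v, hvu, by rw [iteratedDeriv_zero, hv, iteratedDeriv_one]⟩
  · exact isBigO_top_of_forall_exists_near (h4.isBigO_iteratedDeriv ht1 ht) (exists_abs_phiFn_le _)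

lemma hasDerivAt_algMoment_iteratedDeriv_phiFn (h4 : Sigma4 σ m β K C) {t j : ℕ} (ht : t < m)
    (hj : j ≤ m) (x : ℝ) :
    HasDerivAt (algMoment (iteratedDeriv t (phiFn σ)) j)
      (algMoment (iteratedDeriv (t + 1) (phiFn σ)) j x
        - j * algMoment (iteratedDeriv t (phiFn σ)) (j - 1) x) x := by
  have hφ : ContDiff ℝ m (phiFn σ) := h4.2.2.1.phiFn
  refine hasDerivAt_algMoment (fun v => ?_) (h4.isBigO_iteratedDeriv_phiFn ht.le)
    (h4.isBigO_iteratedDeriv_phiFn ht) hj x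
  rw [iteratedDeriv_succ]
  exact ((hφ.differentiable_iteratedDeriv t (by exact_mod_cast ht)) v).hasDerivAt

lemma algMoment_iteratedDeriv_one_phiFn_zero (h4 : Sigma4 σ m β K C) (x : ℝ) :
    algMoment (iteratedDeriv 1 (phiFn σ)) 0 x = 0 := by
  have h1m : 1 ≤ m := by linarith [h4.1]
  rw [algMoment_eq_tsum, iteratedDeriv_phiFn (h4.2.2.1.of_le (by exact_mod_cast h1m))]
  simp only [pow_zero, mul_one]
  have hsum := summable_comp_sub_int
    ((h4.isBigO_iteratedDeriv le_rfl h1m).trans (isBigO_top_inv_one_add_abs_pow_of_le (by omega)))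
  exact tsum_phiFn_comp_sub_int hsum x

end Sigma4

section Recursion

variable {σ : ℝ → ℝ} {m : ℕ} {β : ℝ} {K C : ℕ → ℝ} {A : ℕ → ℝ}

lemma hasDerivAt_algMoment_iteratedDeriv_phiFn_eq_zero (h4 : Sigma4 σ m β K C)
    (h5 : Sigma5 σ m A) {t j : ℕ} (ht : t < m) (hj : j ≤ m) (x : ℝ) :
    HasDerivAt (algMoment (iteratedDeriv t (phiFn σ)) j) 0 x := by
  induction t generalizing j x with
  | zero =>
    rcases j.eq_zero_or_pos with rfl | hj1
    · have H := h4.hasDerivAt_algMoment_iteratedDeriv_phiFn ht hj x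
      rwa [h4.algMoment_iteratedDeriv_one_phiFn_zero x, Nat.cast_zero, zero_mul, sub_zero] at H
    · rw [show algMoment (iteratedDeriv 0 (phiFn σ)) j = fun _ => A j from funext (h5 j hj1 hj)]
      exact hasDerivAt_const x _
  | succ t ih =>
    have hrec : algMoment (iteratedDeriv (t + 1) (phiFn σ)) j
        = fun y => j * algMoment (iteratedDeriv t (phiFn σ)) (j - 1) y := funext fun y =>
      sub_eq_zero.mp ((h4.hasDerivAt_algMoment_iteratedDeriv_phiFn (by omega) hj y).unique
        (ih (by omega) hj y))
    rw [hrec]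
    simpa using (ih (by omega) (by omega) x).const_mul (j : ℝ)

lemma algMoment_iteratedDeriv_succ_phiFn (h4 : Sigma4 σ m β K C) (h5 : Sigma5 σ m A)
    {t j : ℕ} (ht : t < m) (hj : j ≤ m) (x : ℝ) :
    algMoment (iteratedDeriv (t + 1) (phiFn σ)) j x
      = j * algMoment (iteratedDeriv t (phiFn σ)) (j - 1) x :=
  sub_eq_zero.mp ((h4.hasDerivAt_algMoment_iteratedDeriv_phiFn ht hj x).unique
    (hasDerivAt_algMoment_iteratedDeriv_phiFn_eq_zero h4 h5 ht hj x))

end Recursion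

theorem alg_moment_deriv_vanishes_general (σ : ℝ → ℝ) (β : ℝ) (m : ℕ) (K C : ℕ → ℝ) (A : ℕ → ℝ)
    (h4 : Sigma4 σ m β K C) (h5 : Sigma5 σ m A)
    (s : ℕ) (hsm : s ≤ m) (j : ℕ) (hj : j < s) (x : ℝ) :
    algMoment (iteratedDeriv s (phiFn σ)) j x = 0 := by
  induction j generalizing s with
  | zero =>
    obtain ⟨t, rfl⟩ : ∃ t, s = t + 1 := ⟨s - 1, by omega⟩
    rw [algMoment_iteratedDeriv_succ_phiFn h4 h5 (by omega) (by omega), Nat.cast_zero, zero_mul]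
  | succ j ih =>
    obtain ⟨t, rfl⟩ : ∃ t, s = t + 1 := ⟨s - 1, by omega⟩
    rw [algMoment_iteratedDeriv_succ_phiFn h4 h5 (by omega) (by omega), Nat.add_sub_cancel,
      ih t (by omega) (by omega), mul_zero]

theorem alg_moment_deriv_vanishes (σ : ℝ → ℝ) (α β : ℝ) (m : ℕ) (K C : ℕ → ℝ) (A : ℕ → ℝ)
    (hσ : Sigmoidal σ) (hmono : Monotone σ) (h1 : Sigma1 σ) (h2 : Sigma2 σ) (h3 : Sigma3 σ α)
    (h4 : Sigma4 σ m β K C) (h5 : Sigma5 σ m A)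
    (s : ℕ) (hs1 : 1 ≤ s) (hsm : s ≤ m) (j : ℕ) (hj : j < s) (x : ℝ) :
    algMoment (iteratedDeriv s (phiFn σ)) j x = 0 :=
  alg_moment_deriv_vanishes_general σ β m K C A h4 h5 s hsm j hj x
end
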